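/- arXiv:2404.08025 — 6 statements merged into one kernel-verified Lean document; each statement's English description precedes it below -/
import Mathlib

section
/- Let α₁, ..., αₙ be positive real algebraic numbers such that log α₁, ..., log αₙ are linearly independent over ℚ. Then the real numbers 1, π, log α₁, ..., log αₙ are linearly independent over the field of algebraic numbers. In particular π / log αₖ is transcendental for every k. -/
section aux

private lemma alg_ofReal {x : ℝ} (hx : IsAlgebraic ℚ x) : IsAlgebraic ℚ (x : ℂ) := by
  simpa using hx.algHom (Complex.ofRealAm.restrictScalars ℚ)

private lemma alg_I : IsAlgebraic ℚ (Complex.I) :=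
  ⟨Polynomial.X ^ 2 + 1, by
    intro h
    have := congrArg (Polynomial.coeff · 0) h
    simp at this, by simp⟩

private lemma alg_mul {x y : ℂ} (hx : IsAlgebraic ℚ x) (hy : IsAlgebraic ℚ y) :
    IsAlgebraic ℚ (x * y) := by
  rw [isAlgebraic_iff_isIntegral] at hx hy ⊢
  exact hx.mul hy

private lemma alg_neg {x : ℂ} (hx : IsAlgebraic ℚ x) : IsAlgebraic ℚ (-x) := by
  rw [isAlgebraic_iff_isIntegral] at hx ⊢
  exact hx.neg

end aux

/-- Baker's theorem (assumed as a hypothesis): if `l k` are logarithms of nonzero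
algebraic numbers `β k` that are linearly independent over `ℚ`, then `1` together
with the `l k` is linearly independent over the field of algebraic numbers. -/
theorem stmt_1 (n : ℕ) (α : Fin n → ℝ)
    (hpos : ∀ k, 0 < α k)
    (halg : ∀ k, IsAlgebraic ℚ (α k))
    (hli : LinearIndependent ℚ (fun k => Real.log (α k)))
    (hBaker : ∀ (m : ℕ) (β l : Fin m → ℂ),
      (∀ k, Complex.exp (l k) = β k) → (∀ k, IsAlgebraic ℚ (β k)) →
      LinearIndependent ℚ l →
      ∀ (c : ℂ) (d : Fin m → ℂ), IsAlgebraic ℚ c → (∀ k, IsAlgebraic ℚ (d k)) →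
        c + ∑ k, d k * l k = 0 → c = 0 ∧ ∀ k, d k = 0) :
    (∀ (c₀ c₁ : ℝ) (d : Fin n → ℝ),
      IsAlgebraic ℚ c₀ → IsAlgebraic ℚ c₁ → (∀ k, IsAlgebraic ℚ (d k)) →
      c₀ + c₁ * Real.pi + ∑ k, d k * Real.log (α k) = 0 →
      c₀ = 0 ∧ c₁ = 0 ∧ ∀ k, d k = 0) ∧
    ∀ k, Transcendental ℚ (Real.pi / Real.log (α k)) := by
  have hmain : ∀ (c₀ c₁ : ℝ) (d : Fin n → ℝ),
      IsAlgebraic ℚ c₀ → IsAlgebraic ℚ c₁ → (∀ k, IsAlgebraic ℚ (d k)) →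
      c₀ + c₁ * Real.pi + ∑ k, d k * Real.log (α k) = 0 →
      c₀ = 0 ∧ c₁ = 0 ∧ ∀ k, d k = 0 := by
    intro c₀ c₁ d h0 h1 hd heq
    set l : Fin (n + 1) → ℂ :=
      Fin.cons ((Real.pi : ℂ) * Complex.I) (fun k => (Real.log (α k) : ℂ)) with hl
    set β : Fin (n + 1) → ℂ := Fin.cons (-1) (fun k => ((α k : ℝ) : ℂ)) with hβ
    have hexp : ∀ k, Complex.exp (l k) = β k := by
      refine Fin.cases ?_ ?_
      · simp [hl, hβ, Complex.exp_pi_mul_I]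
      · intro i
        simp [hl, hβ, ← Complex.ofReal_exp, Real.exp_log (hpos i)]
    have hβalg : ∀ k, IsAlgebraic ℚ (β k) := by
      refine Fin.cases ?_ ?_
      · simpa [hβ] using alg_neg (by simpa using isAlgebraic_rat (A := ℂ) ℚ 1)
      · intro i; simpa [hβ] using alg_ofReal (halg i)
    have hlind : LinearIndependent ℚ l := by
      rw [Fintype.linearIndependent_iff]
      intro g hg
      rw [Fin.sum_univ_succ] at hg
      have hg' : (g 0 : ℂ) * ((Real.pi : ℂ) * Complex.I)
          + ∑ i, (g i.succ : ℂ) * (Real.log (α i) : ℂ) = 0 := by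
        simpa [hl, Rat.smul_def] using hg
      have him : (g 0 : ℝ) * Real.pi = 0 := by
        have := congrArg Complex.im hg'
        simpa [Complex.im_sum] using this
      have hg0 : g 0 = 0 := by
        have := mul_eq_zero.1 him
        rcases this with h | h
        · exact_mod_cast h
        · exact absurd h Real.pi_ne_zero
      have hre : ∑ i, (g i.succ : ℝ) * Real.log (α i) = 0 := by
        have := congrArg Complex.re hg'
        simpa [Complex.re_sum, hg0] using this
      have hsucc : ∀ i : Fin n, g i.succ = 0 := by
        have := Fintype.linearIndependent_iff.1 hli (fun i => g i.succ) ?_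
        · exact this
        · simpa [Rat.smul_def] using hre
      intro i
      refine Fin.cases hg0 hsucc i
    set dd : Fin (n + 1) → ℂ :=
      Fin.cons (-(c₁ : ℂ) * Complex.I) (fun k => ((d k : ℝ) : ℂ)) with hdd
    have hddalg : ∀ k, IsAlgebraic ℚ (dd k) := by
      refine Fin.cases ?_ ?_
      · exact alg_mul (alg_neg (alg_ofReal h1)) alg_I
      · intro i; exact alg_ofReal (hd i)
    have hsum : (c₀ : ℂ) + ∑ k, dd k * l k = 0 := by
      rw [Fin.sum_univ_succ]
      have : (-(c₁ : ℂ) * Complex.I) * ((Real.pi : ℂ) * Complex.I) = (c₁ : ℂ) * Real.pi := by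
        rw [show (-(c₁ : ℂ) * Complex.I) * ((Real.pi : ℂ) * Complex.I)
          = -((c₁ : ℂ) * (Real.pi : ℂ)) * (Complex.I * Complex.I) by ring, Complex.I_mul_I]
        ring
      simp only [hdd, hl, Fin.cons_zero, Fin.cons_succ]
      rw [this]
      have := congrArg (Complex.ofReal) heq
      push_cast at this ⊢
      linear_combination this
    obtain ⟨hc0, hdd0⟩ := hBaker (n + 1) β l hexp hβalg hlind (c₀ : ℂ) dd
      (alg_ofReal h0) hddalg hsum
    refine ⟨by exact_mod_cast hc0, ?_, ?_⟩
    · have := hdd0 0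
      simp only [hdd, Fin.cons_zero, neg_mul, neg_eq_zero, mul_eq_zero] at this
      rcases this with h | h
      · exact_mod_cast h
      · exact absurd h Complex.I_ne_zero
    · intro k
      have := hdd0 k.succ
      simp only [hdd, Fin.cons_succ] at this
      exact_mod_cast this
  refine ⟨hmain, ?_⟩
  intro k hralg
  classical
  set r := Real.pi / Real.log (α k) with hr
  have hlog : Real.log (α k) ≠ 0 := by
    have := hli.ne_zero k
    simpa using this
  have heq : (0 : ℝ) + 1 * Real.pi
      + ∑ j, (if j = k then -r else 0) * Real.log (α j) = 0 := by
    rw [Finset.sum_eq_single k]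
    · simp [hr, div_mul_cancel₀ _ hlog]
    · intro b _ hb; simp [hb]
    · simp
  have := hmain 0 1 (fun j => if j = k then -r else 0)
    (by simpa using isAlgebraic_rat (A := ℝ) ℚ 0)
    (by simpa using isAlgebraic_rat (A := ℝ) ℚ 1)
    (fun j => by
      by_cases h : j = k
      · simpa [h] using (by
          rw [isAlgebraic_iff_isIntegral] at hralg ⊢
          exact hralg.neg : IsAlgebraic ℚ (-r))
      · simpa [h] using (show IsAlgebraic ℚ (0:ℝ) by simpa using isAlgebraic_rat (A := ℝ) ℚ 0))
    heq
  exact one_ne_zero this.2.1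
end

section
/- For all real x with 0 < x < 1, the digamma reflection formula ψ(1-x) − ψ(x) = π·cot(πx) holds, where ψ is the logarithmic derivative of the Gamma function. -/
/-- The digamma function: the logarithmic derivative of the Gamma function. -/
noncomputable def digamma (x : ℝ) : ℝ := deriv Real.Gamma x / Real.Gamma x

theorem stmt_3 (x : ℝ) (hx0 : 0 < x) (hx1 : x < 1) :
    digamma (1 - x) - digamma x = Real.pi * Real.cot (Real.pi * x) := by
  have hΓx : DifferentiableAt ℝ Real.Gamma x :=
    Real.differentiableAt_Gamma (fun m => by
      have : (0:ℝ) ≤ m := Nat.cast_nonneg m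
      intro h; rw [h] at hx0; linarith)
  have h1x : (0:ℝ) < 1 - x := by linarith
  have hΓ1x : DifferentiableAt ℝ Real.Gamma (1 - x) :=
    Real.differentiableAt_Gamma (fun m => by
      have : (0:ℝ) ≤ m := Nat.cast_nonneg m
      intro h; rw [h] at h1x; linarith)
  have hsin : Real.sin (Real.pi * x) > 0 :=
    Real.sin_pos_of_pos_of_lt_pi (by positivity)
      (by nlinarith [Real.pi_pos])
  have hGx : Real.Gamma x > 0 := Real.Gamma_pos_of_pos hx0
  have hG1x : Real.Gamma (1 - x) > 0 := Real.Gamma_pos_of_pos h1x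
  have hL : HasDerivAt (fun y => Real.Gamma y * Real.Gamma (1 - y))
      (deriv Real.Gamma x * Real.Gamma (1 - x) +
        Real.Gamma x * (deriv Real.Gamma (1 - x) * (-1))) x :=
    hΓx.hasDerivAt.mul (hΓ1x.hasDerivAt.comp x ((hasDerivAt_id x).const_sub 1))
  have hmul : HasDerivAt (fun y => Real.pi * y) Real.pi x := by
    simpa using (hasDerivAt_id x).const_mul Real.pi
  have hs : HasDerivAt (fun y => Real.sin (Real.pi * y))
      (Real.cos (Real.pi * x) * Real.pi) x :=
    (Real.hasDerivAt_sin (Real.pi * x)).comp x hmul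
  have hR : HasDerivAt (fun y => Real.pi / Real.sin (Real.pi * y))
      ((0 * Real.sin (Real.pi * x) - Real.pi * (Real.cos (Real.pi * x) * Real.pi)) /
        (Real.sin (Real.pi * x))^2) x :=
    (hasDerivAt_const x Real.pi).div hs hsin.ne'
  have hfun : (fun y => Real.Gamma y * Real.Gamma (1 - y)) =
      (fun y => Real.pi / Real.sin (Real.pi * y)) := by
    funext y; exact Real.Gamma_mul_Gamma_one_sub y
  rw [hfun] at hL
  have hD := hL.unique hR
  have hrefl : Real.Gamma x * Real.Gamma (1 - x) = Real.pi / Real.sin (Real.pi * x) :=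
    Real.Gamma_mul_Gamma_one_sub x
  rw [digamma, digamma, Real.cot_eq_cos_div_sin]
  have hpi := Real.pi_pos
  have hs0 := hsin.ne'
  have key : deriv Real.Gamma (1 - x) * Real.Gamma x - Real.Gamma (1 - x) * deriv Real.Gamma x
      = Real.pi ^ 2 * Real.cos (Real.pi * x) / Real.sin (Real.pi * x) ^ 2 := by
    rw [eq_div_iff (pow_ne_zero 2 hs0)]
    rw [eq_div_iff (pow_ne_zero 2 hs0)] at hD
    linear_combination -hD
  have hr2 : Real.Gamma (1 - x) * Real.Gamma x = Real.pi / Real.sin (Real.pi * x) := by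
    rw [mul_comm]; exact hrefl
  rw [div_sub_div _ _ hG1x.ne' hGx.ne', key, hr2]
  field_simp
end

section
/- Let q > 1 be a positive algebraic number, b ≥ 3 an integer, and 1 ≤ a < b/2 with gcd(a,b) = 1. Then the number ((q−1)/log q)·π·cot(πa/b) + (2q−3)·(1/2 − a/b) is transcendental. -/
/-!
If the number were algebraic, then so would be `β = (q - 1) cot(πa/b) π / log q`, since the
second summand is algebraic. Writing `c = (q - 1) cot(πa/b)`, which is algebraic (`cot` of a
rational multiple of `π`) and positive (`0 < πa/b < π/2`), this gives the vanishing linear form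
`c π - β log q = 0` with algebraic coefficients and `c ≠ 0`, contradicting Baker's theorem.
-/

open Real

theorem Real.isAlgebraic_cot_rat_mul_pi (r : ℚ) : IsAlgebraic ℤ (cot (r * π)) := by
  rw [cot_eq_cos_div_sin, div_eq_mul_inv]
  exact (isAlgebraic_cos_rat_mul_pi r).mul (isAlgebraic_sin_rat_mul_pi r).inv

theorem Real.cot_pos_of_pos_of_lt_pi_div_two {x : ℝ} (hx0 : 0 < x) (hx : x < π / 2) :
    0 < cot x := by
  rw [cot_eq_cos_div_sin]
  exact div_pos (cos_pos_of_mem_Ioo ⟨by linarith [pi_pos], hx⟩)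
    (sin_pos_of_pos_of_lt_pi hx0 (by linarith [pi_pos]))

theorem Real.cot_pi_mul_div_pos {a b : ℝ} (ha : 0 < a) (hab : 2 * a < b) :
    0 < cot (π * a / b) := by
  have hb : 0 < b := by linarith
  refine cot_pos_of_pos_of_lt_pi_div_two (by positivity) ?_
  rw [div_lt_div_iff₀ hb two_pos]
  nlinarith [mul_lt_mul_of_pos_left hab pi_pos]

theorem Transcendental.add_isAlgebraic {R S : Type*} [CommRing R] [NoZeroDivisors R]
    [CommRing S] [Algebra R S] {x y : S} (hx : Transcendental R x) (hy : IsAlgebraic R y) :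
    Transcendental R (x + y) :=
  fun h ↦ hx (by simpa using h.sub hy)

theorem transcendental_mul_pi_div_log
    (hBaker : ∀ (c₀ c₁ α : ℝ), IsAlgebraic ℚ c₀ → c₀ ≠ 0 → IsAlgebraic ℚ c₁ →
      0 < α → IsAlgebraic ℚ α → Transcendental ℚ (c₀ * π + c₁ * log α))
    {c α : ℝ} (hc : IsAlgebraic ℚ c) (hc0 : c ≠ 0) (hα0 : 0 < α) (hα1 : α ≠ 1)
    (hα : IsAlgebraic ℚ α) : Transcendental ℚ (c * π / log α) := by
  intro hβ
  have hlog : log α ≠ 0 := log_ne_zero_of_pos_of_ne_one hα0 hα1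
  refine hBaker c (-(c * π / log α)) α hc hc0 hβ.neg hα0 hα ?_
  rw [show c * π + -(c * π / log α) * log α = 0 by field_simp; ring]
  exact isAlgebraic_zero

theorem stmt_8_general (q : ℝ) (hq : 1 < q) (hqalg : IsAlgebraic ℚ q)
    (a b : ℕ) (ha1 : 1 ≤ a) (ha2 : 2 * a < b)
    (hBaker : ∀ (c₀ c₁ α : ℝ), IsAlgebraic ℚ c₀ → c₀ ≠ 0 → IsAlgebraic ℚ c₁ →
      0 < α → IsAlgebraic ℚ α →
      Transcendental ℚ (c₀ * Real.pi + c₁ * Real.log α)) :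
    Transcendental ℚ
      ((q - 1) / Real.log q * Real.pi * Real.cot (Real.pi * a / b)
        + (2 * q - 3) * (1 / 2 - (a : ℝ) / b)) := by
  have hcot_pos : 0 < cot (π * a / b) :=
    cot_pi_mul_div_pos (by exact_mod_cast ha1) (by exact_mod_cast ha2)
  have hcot : IsAlgebraic ℚ (cot (π * a / b)) := by
    rw [show π * a / b = ((a / b : ℚ) : ℝ) * π by push_cast; ring]
    exact (isAlgebraic_cot_rat_mul_pi _).extendScalars (algebraMap ℤ ℚ).injective_int
  have hrest : IsAlgebraic ℚ ((2 * q - 3) * (1 / 2 - (a : ℝ) / b)) := by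
    have h := ((isAlgebraic_ratCast ℚ 2).mul hqalg).sub (isAlgebraic_ratCast ℚ 3)
      |>.mul (isAlgebraic_ratCast (A := ℝ) ℚ (1 / 2 - a / b))
    push_cast at h
    exact h
  have hmain := transcendental_mul_pi_div_log hBaker (hqalg.sub isAlgebraic_one |>.mul hcot)
    (mul_pos (sub_pos.2 hq) hcot_pos).ne' (by linarith) hq.ne' hqalg
  rw [show (q - 1) / log q * π * cot (π * a / b) = (q - 1) * cot (π * a / b) * π / log q by ring]
  exact hmain.add_isAlgebraic hrest

theorem stmt_8 (q : ℝ) (hq : 1 < q) (hqalg : IsAlgebraic ℚ q)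
    (a b : ℕ) (hb : 3 ≤ b) (ha1 : 1 ≤ a) (ha2 : 2 * a < b) (hab : Nat.gcd a b = 1)
    (hBaker : ∀ (c₀ c₁ α : ℝ), IsAlgebraic ℚ c₀ → c₀ ≠ 0 → IsAlgebraic ℚ c₁ →
      0 < α → IsAlgebraic ℚ α →
      Transcendental ℚ (c₀ * Real.pi + c₁ * Real.log α)) :
    Transcendental ℚ
      ((q - 1) / Real.log q * Real.pi * Real.cot (Real.pi * a / b)
        + (2 * q - 3) * (1 / 2 - (a : ℝ) / b)) :=
  stmt_8_general q hq hqalg a b ha1 ha2 hBaker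
end

section
/- Let b ≥ 3 be an integer and let T = {a : 1 ≤ a < b/2, gcd(a,b) = 1}, which has φ(b)/2 elements. Assume Okada's theorem that the real numbers {cot(πa/b) : a ∈ T} are linearly independent over ℚ. Let q > 1 be a positive algebraic number, and suppose π/log q is transcendental. If rational numbers c_a (a ∈ T) satisfy Σ_{a∈T} c_a·[((q−1)/log q)·π·cot(πa/b) + (2q−3)(1/2 − a/b)] = 0, then c_a = 0 for all a ∈ T. -/
/-!
The relation reads `(π / log q) · (q - 1) S + (2q - 3) R = 0` with `S = Σ c_a cot(πa/b)` and
`R` rational. Since `cot(πr) = (ζ + 1) / (i (1 - ζ))` for the root of unity `ζ = e^{2πir}`, `S` is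
algebraic, so transcendence of `π / log q` forces `(q - 1) S = 0`, i.e. `S = 0`, and Okada's
theorem finishes.
-/

open Complex Real

theorem Transcendental.eq_zero_of_mul_add_eq_zero {R A : Type*} [CommRing R] [NoZeroDivisors R]
    [Field A] [Algebra R A] {x α β : A} (hx : Transcendental R x) (hα : IsAlgebraic R α)
    (hβ : IsAlgebraic R β) (h : α * x + β = 0) : α = 0 := by
  by_contra hα0
  have hx_eq : x = -β * α⁻¹ := by
    field_simp
    linear_combination h
  exact hx (hx_eq ▸ hβ.neg.mul hα.inv)

theorem isAlgebraic_exp_two_pi_I_mul_ratCast (r : ℚ) :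
    IsAlgebraic ℚ (exp (2 * π * I * r)) := by
  refine IsAlgebraic.of_pow r.den_pos ?_
  have hr : (r : ℂ) * r.den = r.num := by exact_mod_cast r.mul_den_eq_num
  rw [← Complex.exp_nat_mul, show (r.den : ℂ) * (2 * π * I * r) = r.num * (2 * π * I) by
    linear_combination 2 * π * I * hr, exp_int_mul_two_pi_mul_I]
  exact isAlgebraic_one

theorem isAlgebraic_cot_pi_mul_ratCast (r : ℚ) : IsAlgebraic ℚ (Real.cot (π * r)) := by
  rw [← isAlgebraic_algebraMap_iff (A := ℂ) ofReal_injective]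
  have hζ := isAlgebraic_exp_two_pi_I_mul_ratCast r
  have hI : IsAlgebraic ℚ I := isIntegral_rat_I.isAlgebraic
  rw [Complex.coe_algebraMap, ofReal_cot, ofReal_mul, ofReal_ratCast, cot_pi_eq_exp_ratio]
  exact (hζ.add isAlgebraic_one).mul (hI.mul (isAlgebraic_one.sub hζ)).inv

theorem stmt_10_general (b : ℕ)
    (T : Finset ℕ)
    (hOkada : ∀ c : ℕ → ℚ,
      (∑ a ∈ T, (c a : ℝ) * Real.cot (Real.pi * a / b)) = 0 → ∀ a ∈ T, c a = 0)
    (q : ℝ) (hq : 1 < q) (hqalg : IsAlgebraic ℚ q)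
    (hπ : Transcendental ℚ (Real.pi / Real.log q))
    (c : ℕ → ℚ)
    (hsum : ∑ a ∈ T, (c a : ℝ) *
        ((q - 1) / Real.log q * Real.pi * Real.cot (Real.pi * a / b)
          + (2 * q - 3) * (1 / 2 - (a : ℝ) / b)) = 0) :
    ∀ a ∈ T, c a = 0 := by
  set S : ℝ := ∑ a ∈ T, (c a : ℝ) * Real.cot (π * a / b)
  set R : ℚ := ∑ a ∈ T, c a * (1 / 2 - (a : ℚ) / b)
  have hsplit : (q - 1) * S * (π / Real.log q) + (2 * q - 3) * R = 0 := by
    rw [← hsum]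
    simp only [S, R]
    push_cast
    simp only [Finset.mul_sum, Finset.sum_mul]
    rw [← Finset.sum_add_distrib]
    refine Finset.sum_congr rfl fun a _ => ?_
    ring
  have hS_alg : IsAlgebraic ℚ S :=
    Subalgebra.sum_mem (Subalgebra.algebraicClosure ℚ ℝ) fun a _ =>
      (isAlgebraic_ratCast ℚ (c a)).mul (by
        simpa [mul_div_assoc] using isAlgebraic_cot_pi_mul_ratCast (a / b))
  have hR_alg : IsAlgebraic ℚ ((2 * q - 3) * R) :=
    ((isAlgebraic_ratCast ℚ 2).mul hqalg |>.sub (isAlgebraic_ratCast ℚ 3)).mul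
      (isAlgebraic_ratCast ℚ R)
  have hS : S = 0 := by
    have hqS : (q - 1) * S = 0 :=
      hπ.eq_zero_of_mul_add_eq_zero ((hqalg.sub isAlgebraic_one).mul hS_alg) hR_alg hsplit
    exact (mul_eq_zero.mp hqS).resolve_left (by linarith)
  exact hOkada c hS

theorem stmt_10 (b : ℕ) (hb : 3 ≤ b)
    (T : Finset ℕ)
    (hT : T = (Finset.range b).filter (fun a => 1 ≤ a ∧ 2 * a < b ∧ Nat.gcd a b = 1))
    (hcard : T.card = Nat.totient b / 2)
    (hOkada : ∀ c : ℕ → ℚ,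
      (∑ a ∈ T, (c a : ℝ) * Real.cot (Real.pi * a / b)) = 0 → ∀ a ∈ T, c a = 0)
    (q : ℝ) (hq : 1 < q) (hqalg : IsAlgebraic ℚ q)
    (hπ : Transcendental ℚ (Real.pi / Real.log q))
    (c : ℕ → ℚ)
    (hsum : ∑ a ∈ T, (c a : ℝ) *
        ((q - 1) / Real.log q * Real.pi * Real.cot (Real.pi * a / b)
          + (2 * q - 3) * (1 / 2 - (a : ℝ) / b)) = 0) :
    ∀ a ∈ T, c a = 0 :=
  stmt_10_general b T hOkada q hq hqalg hπ c hsum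
end

section
/- For q > 1 real, x > 0, and s complex with Re(s) > 1, the q-Hurwitz zeta function satisfies the expansion ζ_q(s,x) = (q−1)^s · Σ_{k=0}^∞ [s(s+1)⋯(s+k−1)/k!] · q^{(s+k−1)(1−x)}/(q^{s+k−1} − 1), obtained by binomial expansion of (q^{n+x} − 1)^{−s}. -/
/-!
With `T = (n + x) log q`, the `n`-th term of `ζ_q(s, x)` is
`(q - 1)^s e^T (e^T - 1)^{-s} = (q - 1)^s e^{(1-s)T} (1 - e^{-T})^{-s}`, and the binomial series
turns it into `(q - 1)^s ∑_k (s)_k / k! e^{-(s+k-1)T}`. For `Re s > 1` the resulting double series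
converges absolutely, so the two summations can be swapped; for fixed `k` the sum over `n` is
geometric with ratio `q^{-(s+k-1)}`.
-/

open Finset Complex

theorem prod_range_add_div_factorial_eq_choose (s : ℂ) (k : ℕ) :
    (∏ i ∈ range k, (s + i)) / (k.factorial : ℂ) = Ring.choose (s + k - 1) k := by
  rw [div_eq_iff (by simp [Nat.factorial_ne_zero]), mul_comm, ← nsmul_eq_mul,
    ← Ring.descPochhammer_eq_factorial_smul_choose, ← Polynomial.aeval_eq_smeval,
    Polynomial.aeval_def, Polynomial.eval₂_eq_eval_map, descPochhammer_map,
    descPochhammer_eval_eq_prod_range, ← prod_range_reflect]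
  refine prod_congr rfl fun i hi ↦ ?_
  rw [Nat.sub_sub, Nat.cast_sub (by simpa [add_comm] using mem_range.1 hi)]
  push_cast
  ring

theorem hasSum_choose_mul_pow (s : ℂ) {u : ℂ} (hu : ‖u‖ < 1) :
    HasSum (fun k : ℕ ↦ Ring.choose (s + k - 1) k * u ^ k) (1 / (1 - u) ^ s) := by
  have h := (one_div_one_sub_cpow_hasFPowerSeriesOnBall_zero s).hasSum (y := u)
    (by simpa [← ofReal_norm] using hu)
  simpa [FormalMultilinearSeries.ofScalars_apply_eq, mul_comm] using h

theorem summable_norm_choose_mul_pow (s : ℂ) {r : ℝ} (hr₀ : 0 ≤ r) (hr : r < 1) :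
    Summable (fun k : ℕ ↦ ‖Ring.choose (s + k - 1) k‖ * r ^ k) := by
  lift r to NNReal using hr₀
  have hr' : (r : ENNReal) < 1 := by exact_mod_cast hr
  simpa [FormalMultilinearSeries.ofScalars_norm] using
    FormalMultilinearSeries.summable_norm_mul_pow _
      (hr'.trans_le (one_div_one_sub_cpow_hasFPowerSeriesOnBall_zero s).r_le)

theorem hasSum_cexp_neg_mul_add {z : ℂ} (hz : 0 < z.re) (x : ℂ) :
    HasSum (fun n : ℕ ↦ cexp (-(z * (n + x)))) (cexp (z * (1 - x)) / (cexp z - 1)) := by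
  have hz1 : cexp z - 1 ≠ 0 := by
    have h : 1 < ‖cexp z‖ := by rw [norm_exp]; exact Real.one_lt_exp_iff.2 hz
    exact sub_ne_zero.2 fun h1 ↦ by simp [h1] at h
  have hterm : (fun n : ℕ ↦ cexp (-(z * (n + x)))) =
      fun n : ℕ ↦ cexp (-(z * x)) * cexp (-z) ^ n := by
    ext n
    rw [← exp_nat_mul, ← exp_add]
    ring_nf
  have hsum : cexp (z * (1 - x)) / (cexp z - 1) = cexp (-(z * x)) * (1 - cexp (-z))⁻¹ := by
    have hE : cexp z ≠ 0 := exp_ne_zero z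
    calc cexp (z * (1 - x)) / (cexp z - 1) = cexp (-(z * x)) * cexp z / (cexp z - 1) := by
          rw [← exp_add]; ring_nf
      _ = cexp (-(z * x)) * (1 - cexp (-z))⁻¹ := by
          rw [exp_neg z]; field_simp
  have hρ : ‖cexp (-z)‖ < 1 := by simpa [norm_exp] using hz
  rw [hterm, hsum]
  exact (hasSum_geometric_of_norm_lt_one hρ).mul_left _

theorem hasSum_exp_div_exp_sub_one_cpow {T : ℝ} (hT : 0 < T) (s : ℂ) :
    HasSum (fun k : ℕ ↦ Ring.choose (s + k - 1) k * cexp (-((s + k - 1) * T)))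
      (Real.exp T / ((Real.exp T - 1 : ℝ) : ℂ) ^ s) := by
  set u := Real.exp (-T)
  have hu : u < 1 := Real.exp_lt_one_iff.2 (neg_lt_zero.2 hT)
  have hsub : Real.exp T - 1 = Real.exp T * (1 - u) := by
    rw [mul_sub, mul_one, ← Real.exp_add, add_neg_cancel, Real.exp_zero]
  have hpow : ((Real.exp T : ℝ) : ℂ) ^ s = cexp (T * s) := by
    rw [cpow_def_of_ne_zero (by exact_mod_cast (Real.exp_pos T).ne'),
      ← ofReal_log (Real.exp_pos T).le, Real.log_exp]
  have hterm : (fun k : ℕ ↦ Ring.choose (s + k - 1) k * cexp (-((s + k - 1) * T))) =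
      fun k : ℕ ↦ cexp (T * (1 - s)) * (Ring.choose (s + k - 1) k * (u : ℂ) ^ k) := by
    ext k
    rw [ofReal_exp, ← exp_nat_mul, mul_left_comm, ← exp_add]
    push_cast
    ring_nf
  have hsum : Real.exp T / ((Real.exp T - 1 : ℝ) : ℂ) ^ s =
      cexp (T * (1 - s)) * (1 / (1 - u) ^ s) := by
    rw [hsub, ofReal_mul, mul_cpow_ofReal_nonneg (Real.exp_pos T).le (by linarith), hpow,
      mul_sub, mul_one, exp_sub, ofReal_exp]
    have : ((1 - u : ℝ) : ℂ) ^ s ≠ 0 :=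
      cpow_ne_zero_iff.2 (Or.inl (by exact_mod_cast (sub_pos.2 hu).ne'))
    push_cast at this ⊢
    field_simp
  rw [hterm, hsum]
  have hu' : ‖(u : ℂ)‖ < 1 := by rwa [norm_real, Real.norm_of_nonneg (Real.exp_pos _).le]
  exact (hasSum_choose_mul_pow s hu').mul_left _

theorem summable_choose_mul_cexp_neg_mul_add {s : ℂ} (hs : 1 < s.re) {L : ℝ} (hL : 0 < L)
    {x : ℝ} (hx : 0 < x) :
    Summable (fun p : ℕ × ℕ ↦
      Ring.choose (s + p.2 - 1) p.2 * cexp (-((s + p.2 - 1) * (L * (p.1 + x) : ℝ)))) := by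
  set σ := s.re
  have hgeom : Summable (fun n : ℕ ↦ Real.exp (-((σ - 1) * L)) ^ n) :=
    summable_geometric_of_lt_one (Real.exp_pos _).le
      (Real.exp_lt_one_iff.2 (by nlinarith))
  have hbinom := summable_norm_choose_mul_pow s (Real.exp_pos (-(L * x))).le
    (Real.exp_lt_one_iff.2 (by nlinarith))
  refine Summable.of_norm_bounded (hgeom.mul_of_nonneg hbinom (fun _ ↦ by positivity)
    (fun _ ↦ by positivity)) fun ⟨n, k⟩ ↦ ?_
  have hexp : -((σ + k - 1) * (L * (n + x))) ≤ n * -((σ - 1) * L) + k * -(L * x) := by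
    have : 0 ≤ (k : ℝ) * L * n := by positivity
    nlinarith [mul_pos (sub_pos.2 hs) (mul_pos hL hx)]
  calc ‖Ring.choose (s + k - 1) k * cexp (-((s + k - 1) * (L * (n + x) : ℝ)))‖
      = ‖Ring.choose (s + k - 1) k‖ * Real.exp (-((σ + k - 1) * (L * (n + x)))) := by
        simp [norm_exp, σ]
    _ ≤ ‖Ring.choose (s + k - 1) k‖ * Real.exp (n * -((σ - 1) * L) + k * -(L * x)) := by
        gcongr
    _ = Real.exp (-((σ - 1) * L)) ^ n *
          (‖Ring.choose (s + k - 1) k‖ * Real.exp (-(L * x)) ^ k) := by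
        rw [← Real.exp_nat_mul, ← Real.exp_nat_mul, Real.exp_add]
        ring

theorem stmt_13 (q x : ℝ) (hq : 1 < q) (hx : 0 < x) (s : ℂ) (hs : 1 < s.re) :
    (∑' n : ℕ, ((q ^ ((n : ℝ) + x) : ℝ) : ℂ) /
        (((q ^ ((n : ℝ) + x) - 1) / (q - 1) : ℝ) : ℂ) ^ s)
      = (((q - 1 : ℝ)) : ℂ) ^ s *
        ∑' k : ℕ, ((∏ i ∈ Finset.range k, (s + i)) / (Nat.factorial k : ℂ)) *
          (((q : ℝ)) : ℂ) ^ ((s + k - 1) * (1 - (x : ℂ))) /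
            (((q : ℝ) : ℂ) ^ (s + k - 1) - 1) := by
  set L := Real.log q
  have hL : 0 < L := Real.log_pos hq
  set f : ℕ → ℕ → ℂ := fun n k ↦
    Ring.choose (s + k - 1) k * cexp (-((s + k - 1) * (L * (n + x) : ℝ)))
  have hrow (n : ℕ) : ((q ^ ((n : ℝ) + x) : ℝ) : ℂ) /
      (((q ^ ((n : ℝ) + x) - 1) / (q - 1) : ℝ) : ℂ) ^ s =
        ((q - 1 : ℝ) : ℂ) ^ s * ∑' k, f n k := by
    have hT : 0 < L * (n + x) := by positivity
    rw [Real.rpow_def_of_pos (by linarith), ofReal_div,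
      div_cpow_ofReal_nonneg (by linarith [Real.add_one_le_exp (L * (n + x))]) (by linarith),
      div_div_eq_mul_div, mul_comm, mul_div_assoc,
      (hasSum_exp_div_exp_sub_one_cpow hT s).tsum_eq]
  have hpow (w : ℂ) : ((q : ℝ) : ℂ) ^ w = cexp (L * w) := by
    rw [cpow_def_of_ne_zero (by exact_mod_cast (by linarith : (0 : ℝ) < q).ne'),
      ← ofReal_log (by linarith)]
  have hcol (k : ℕ) : ∑' n, f n k =
      (∏ i ∈ Finset.range k, (s + i)) / (Nat.factorial k : ℂ) *
        ((q : ℝ) : ℂ) ^ ((s + k - 1) * (1 - (x : ℂ))) /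
          (((q : ℝ) : ℂ) ^ (s + k - 1) - 1) := by
    have hz : 0 < (L * (s + k - 1)).re := by
      rw [re_ofReal_mul, sub_re, add_re, natCast_re, one_re]
      exact mul_pos hL (by linarith [k.cast_nonneg (α := ℝ)])
    rw [prod_range_add_div_factorial_eq_choose, hpow, hpow, mul_div_assoc, ← mul_assoc,
      ← (hasSum_cexp_neg_mul_add hz x).tsum_eq, ← tsum_mul_left]
    refine tsum_congr fun n ↦ ?_
    simp only [f]
    congr 2
    push_cast
    ring
  rw [tsum_congr hrow, tsum_mul_left, ← tsum_congr hcol]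
  congr 1
  exact (Summable.tsum_comm (f := f) (summable_choose_mul_cexp_neg_mul_add hs hL hx)).symm
end

section
/- Let q > 1 be a positive algebraic number and b ≥ 3 an integer with gcd(a,b) = 1, 1 ≤ a < b/2, and similarly 1 ≤ a' < b/2 with gcd(a',b) = 1 and a ≠ a'. Assuming Okada's linear independence of {cot(πa/b)} and Baker's theorem, the ratio [((q−1)/log q)·π·cot(πa/b) + (2q−3)(1/2 − a/b)] / [((q−1)/log q)·π·cot(πa'/b) + (2q−3)(1/2 − a'/b)] is irrational. -/
/-!
If the ratio were a rational `r` (or its denominator vanished), a nontrivial rational relation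
`u X + v X' = 0` would hold between the two numbers. Multiplying by `log q` turns it into
`(q - 1)(u cot(πa/b) + v cot(πa'/b)) π + (2q - 3)(u (1/2 - a/b) + v (1/2 - a'/b)) log q = 0`
with algebraic coefficients, so by Baker's theorem the coefficient of `π` vanishes. This is a
rational relation between two distinct cotangents, which Okada's theorem forbids.
-/

open Real

def BakerPiLog : Prop :=
  ∀ (c₀ c₁ α : ℝ), IsAlgebraic ℚ c₀ → c₀ ≠ 0 → IsAlgebraic ℚ c₁ →
    0 < α → IsAlgebraic ℚ α → Transcendental ℚ (c₀ * π + c₁ * log α)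

theorem BakerPiLog.eq_zero_of_mul_pi_add_mul_log_eq_zero (hB : BakerPiLog) {c₀ c₁ α : ℝ}
    (hc₀ : IsAlgebraic ℚ c₀) (hc₁ : IsAlgebraic ℚ c₁) (hα : 0 < α) (hαalg : IsAlgebraic ℚ α)
    (h : c₀ * π + c₁ * log α = 0) : c₀ = 0 := by
  by_contra hne
  exact hB c₀ c₁ α hc₀ hne hc₁ hα hαalg (h ▸ isAlgebraic_zero)

theorem Real.isAlgebraic_cot_pi_mul_rat (x : ℚ) : IsAlgebraic ℚ (cot (π * x)) := by
  rw [← tan_inv_eq_cot, mul_comm]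
  exact ((isAlgebraic_tan_rat_mul_pi x).extendScalars (algebraMap ℤ ℚ).injective_int).inv

theorem irrational_div_of_linearIndependent {x y : ℝ} (h : LinearIndependent ℚ ![x, y]) :
    Irrational (x / y) := by
  rintro ⟨r, hr⟩
  rw [LinearIndependent.pair_iff] at h
  by_cases hy : y = 0
  · simpa using h 0 1 (by simp [hy])
  · have hx : x = r * y := by rw [hr, div_mul_cancel₀ x hy]
    simpa using h 1 (-r) (by simp [hx, Rat.smul_def])

theorem linearIndependent_pair_of_forall_sum_eq_zero {ι : Type*} [DecidableEq ι]
    {T : Finset ι} {f : ι → ℝ}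
    (hT : ∀ c : ι → ℚ, ∑ t ∈ T, (c t : ℝ) * f t = 0 → ∀ t ∈ T, c t = 0)
    {i j : ι} (hi : i ∈ T) (hj : j ∈ T) (hij : i ≠ j) :
    LinearIndependent ℚ ![f i, f j] := by
  rw [LinearIndependent.pair_iff]
  intro u v huv
  let c : ι → ℚ := fun t => if t = i then u else if t = j then v else 0
  have hsum : ∑ t ∈ T, (c t : ℝ) * f t = 0 := by
    rw [Finset.sum_eq_add_of_mem i j hi hj hij (fun t _ ht => by simp [c, ht.1, ht.2])]
    simpa [c, hij.symm, Rat.smul_def] using huv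
  exact ⟨by simpa [c] using hT c hsum i hi, by simpa [c, hij.symm] using hT c hsum j hj⟩

/-- `γ₀(q, x) - γ₀(q, 1 - x)`, in the notation of the generalized Euler constants `γ₀(q, ·)`. -/
noncomputable def gammaDiff (q x : ℝ) : ℝ :=
  (q - 1) / log q * π * cot (π * x) + (2 * q - 3) * (1 / 2 - x)

theorem linearIndependent_gammaDiff (hB : BakerPiLog) {q : ℝ} (hq : 1 < q)
    (hqalg : IsAlgebraic ℚ q) {x y : ℚ}
    (hcot : LinearIndependent ℚ ![cot (π * x), cot (π * y)]) :
    LinearIndependent ℚ ![gammaDiff q x, gammaDiff q y] := by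
  rw [LinearIndependent.pair_iff] at hcot ⊢
  intro u v huv
  apply hcot
  set C := (u : ℝ) * cot (π * x) + v * cot (π * y)
  set D := (u : ℝ) * (1 / 2 - x) + v * (1 / 2 - y)
  have hlog : log q ≠ 0 := (log_pos hq).ne'
  have hrel : ((q - 1) * C) * π + ((2 * q - 3) * D) * log q = 0 := by
    simp only [gammaDiff, Rat.smul_def] at huv
    field_simp at huv
    linear_combination huv / 2
  have hratC (r : ℚ) : IsAlgebraic ℚ (r : ℝ) := isAlgebraic_ratCast ℚ r
  have hCalg : IsAlgebraic ℚ C :=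
    ((hratC u).mul (isAlgebraic_cot_pi_mul_rat x)).add
      ((hratC v).mul (isAlgebraic_cot_pi_mul_rat y))
  have hDalg : IsAlgebraic ℚ D := by
    simpa [D] using hratC (u * (1 / 2 - x) + v * (1 / 2 - y))
  have hq3alg : IsAlgebraic ℚ (2 * q - 3) := by
    simpa using ((hratC 2).mul hqalg).sub (hratC 3)
  have hcoef := hB.eq_zero_of_mul_pi_add_mul_log_eq_zero
    ((hqalg.sub isAlgebraic_one).mul hCalg) (hq3alg.mul hDalg) (by linarith) hqalg hrel
  simpa [Rat.smul_def, (sub_pos.2 hq).ne'] using hcoef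

theorem stmt_18_general (q : ℝ) (hq : 1 < q) (hqalg : IsAlgebraic ℚ q)
    (b : ℕ)
    (a a' : ℕ) (ha1 : 1 ≤ a) (ha2 : 2 * a < b) (hab : Nat.gcd a b = 1)
    (ha'1 : 1 ≤ a') (ha'2 : 2 * a' < b) (ha'b : Nat.gcd a' b = 1) (hne : a ≠ a')
    (hOkada : ∀ (T : Finset ℕ),
      T = (Finset.range b).filter (fun t => 1 ≤ t ∧ 2 * t < b ∧ Nat.gcd t b = 1) →
      ∀ c : ℕ → ℚ, (∑ t ∈ T, (c t : ℝ) * Real.cot (Real.pi * t / b)) = 0 →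
        ∀ t ∈ T, c t = 0)
    (hBaker : ∀ (c₀ c₁ α : ℝ), IsAlgebraic ℚ c₀ → c₀ ≠ 0 → IsAlgebraic ℚ c₁ →
      0 < α → IsAlgebraic ℚ α →
      Transcendental ℚ (c₀ * Real.pi + c₁ * Real.log α)) :
    Irrational
      (((q - 1) / Real.log q * Real.pi * Real.cot (Real.pi * a / b)
          + (2 * q - 3) * (1 / 2 - (a : ℝ) / b)) /
        ((q - 1) / Real.log q * Real.pi * Real.cot (Real.pi * a' / b)
          + (2 * q - 3) * (1 / 2 - (a' : ℝ) / b))) := by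
  have hmem {t : ℕ} (h1 : 1 ≤ t) (h2 : 2 * t < b) (hcop : Nat.gcd t b = 1) :
      t ∈ (Finset.range b).filter (fun t => 1 ≤ t ∧ 2 * t < b ∧ Nat.gcd t b = 1) := by
    simp only [Finset.mem_filter, Finset.mem_range]
    exact ⟨by omega, h1, h2, hcop⟩
  have hcot := linearIndependent_pair_of_forall_sum_eq_zero (hOkada _ rfl)
    (hmem ha1 ha2 hab) (hmem ha'1 ha'2 ha'b) hne
  have hcast (t : ℕ) : π * t / b = π * ((t / b : ℚ) : ℝ) := by push_cast; ring
  simp only [hcast] at hcot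
  convert irrational_div_of_linearIndependent (linearIndependent_gammaDiff hBaker hq hqalg hcot)
    using 2 <;> simp [gammaDiff, hcast]

theorem stmt_18 (q : ℝ) (hq : 1 < q) (hqalg : IsAlgebraic ℚ q)
    (b : ℕ) (hb : 3 ≤ b)
    (a a' : ℕ) (ha1 : 1 ≤ a) (ha2 : 2 * a < b) (hab : Nat.gcd a b = 1)
    (ha'1 : 1 ≤ a') (ha'2 : 2 * a' < b) (ha'b : Nat.gcd a' b = 1) (hne : a ≠ a')
    (hOkada : ∀ (T : Finset ℕ),
      T = (Finset.range b).filter (fun t => 1 ≤ t ∧ 2 * t < b ∧ Nat.gcd t b = 1) →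
      ∀ c : ℕ → ℚ, (∑ t ∈ T, (c t : ℝ) * Real.cot (Real.pi * t / b)) = 0 →
        ∀ t ∈ T, c t = 0)
    (hBaker : ∀ (c₀ c₁ α : ℝ), IsAlgebraic ℚ c₀ → c₀ ≠ 0 → IsAlgebraic ℚ c₁ →
      0 < α → IsAlgebraic ℚ α →
      Transcendental ℚ (c₀ * Real.pi + c₁ * Real.log α)) :
    Irrational
      (((q - 1) / Real.log q * Real.pi * Real.cot (Real.pi * a / b)
          + (2 * q - 3) * (1 / 2 - (a : ℝ) / b)) /
        ((q - 1) / Real.log q * Real.pi * Real.cot (Real.pi * a' / b)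
          + (2 * q - 3) * (1 / 2 - (a' : ℝ) / b))) :=
  stmt_18_general q hq hqalg b a a' ha1 ha2 hab ha'1 ha'2 ha'b hne hOkada hBaker
end
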